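/- The rate-distortion function (p_X, D) ↦ R_X(D), viewed as a function of the source pmf p_X on the probability simplex over a finite alphabet X (for fixed D strictly larger than D_min for all nearby sources), is continuous: if p^{(k)} → p in total variation then R_{p^{(k)}}(D) → R_p(D). -/

import Mathlib

open Filter

/-- The rate-distortion function of a source pmf `p` on `X` with distortion `d`. -/
noncomputable def rateDistortionFn {X Y : Type} [Fintype X] [Fintype Y]
    (p : X → ℝ) (d : X → Y → ℝ) (D : ℝ) : ℝ :=
  sInf {r : ℝ | ∃ q : X → Y → ℝ,
    (∀ i j, 0 ≤ q i j) ∧ (∑ i, ∑ j, q i j = 1) ∧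
    (∀ i, (∑ j, q i j) = p i) ∧
    (∑ i, ∑ j, q i j * d i j ≤ D) ∧
    r = ∑ i, ∑ j, q i j * Real.logb 2 (q i j / ((∑ j', q i j') * (∑ i', q i' j)))}



section RDaux

set_option linter.unusedSectionVars false
variable {X Y : Type} [Fintype X] [Fintype Y]

/-- Mutual information of a joint matrix. -/
noncomputable def RDMI (q : X → Y → ℝ) : ℝ :=
  ∑ i, ∑ j, q i j * Real.logb 2 (q i j / ((∑ j', q i j') * (∑ i', q i' j)))

/-- The feasible set of values in the rate-distortion infimum. -/
def RDSet (p : X → ℝ) (d : X → Y → ℝ) (D : ℝ) : Set ℝ :=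
  {r : ℝ | ∃ q : X → Y → ℝ,
    (∀ i j, 0 ≤ q i j) ∧ (∑ i, ∑ j, q i j = 1) ∧
    (∀ i, (∑ j, q i j) = p i) ∧
    (∑ i, ∑ j, q i j * d i j ≤ D) ∧
    r = ∑ i, ∑ j, q i j * Real.logb 2 (q i j / ((∑ j', q i j') * (∑ i', q i' j)))}

lemma RD_entry_le_rowS (q : X → Y → ℝ) (hq0 : ∀ i j, 0 ≤ q i j) (i : X) (j : Y) :
    q i j ≤ ∑ j', q i j' :=
  Finset.single_le_sum (fun j' _ => hq0 i j') (Finset.mem_univ j)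

lemma RD_entry_le_colS (q : X → Y → ℝ) (hq0 : ∀ i j, 0 ≤ q i j) (i : X) (j : Y) :
    q i j ≤ ∑ i', q i' j :=
  Finset.single_le_sum (fun i' _ => hq0 i' j) (Finset.mem_univ i)

lemma RD_entry_le_one (q : X → Y → ℝ) (hq0 : ∀ i j, 0 ≤ q i j)
    (hq1 : ∑ i, ∑ j, q i j = 1) (i : X) (j : Y) : q i j ≤ 1 := by
  calc q i j ≤ ∑ j', q i j' := RD_entry_le_rowS q hq0 i j
  _ ≤ ∑ i', ∑ j', q i' j' :=
      Finset.single_le_sum (fun i' _ => Finset.sum_nonneg fun j' _ => hq0 i' j')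
        (Finset.mem_univ i)
  _ = 1 := hq1

lemma RD_colS_sum (q : X → Y → ℝ) (hq1 : ∑ i, ∑ j, q i j = 1) :
    ∑ j, ∑ i, q i j = 1 := by rw [Finset.sum_comm]; exact hq1

lemma RDMI_nonneg (q : X → Y → ℝ) (hq0 : ∀ i j, 0 ≤ q i j)
    (hq1 : ∑ i, ∑ j, q i j = 1) : 0 ≤ RDMI q := by
  have hlog2 : (0:ℝ) < Real.log 2 := Real.log_pos one_lt_two
  have key : ∀ i j, (q i j - (∑ j', q i j') * (∑ i', q i' j)) / Real.log 2 ≤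
      q i j * Real.logb 2 (q i j / ((∑ j', q i j') * (∑ i', q i' j))) := by
    intro i j
    set a := ∑ j', q i j' with ha
    set b := ∑ i', q i' j with hb
    have ha0 : 0 ≤ a := Finset.sum_nonneg fun j' _ => hq0 i j'
    have hb0 : 0 ≤ b := Finset.sum_nonneg fun i' _ => hq0 i' j
    rcases eq_or_lt_of_le (hq0 i j) with hq | hq
    · rw [← hq]
      simp only [zero_mul, zero_sub]
      apply div_nonpos_of_nonpos_of_nonneg _ hlog2.le
      simp [neg_nonpos, mul_nonneg ha0 hb0]
    · have haq : 0 < a := lt_of_lt_of_le hq (RD_entry_le_rowS q hq0 i j)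
      have hbq : 0 < b := lt_of_lt_of_le hq (RD_entry_le_colS q hq0 i j)
      have hab : 0 < a * b := mul_pos haq hbq
      have h1 : Real.log (a * b / q i j) ≤ a * b / q i j - 1 :=
        Real.log_le_sub_one_of_pos (by positivity)
      have h2 : Real.log (a * b / q i j) = - Real.log (q i j / (a * b)) := by
        rw [← Real.log_inv]
        congr 1
        field_simp
      rw [h2] at h1
      -- h1 : -log(q/(ab)) ≤ ab/q - 1
      have h3 : q i j - a * b ≤ q i j * Real.log (q i j / (a * b)) := by
        have := mul_le_mul_of_nonneg_left h1 (hq.le)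
        have hq' : q i j ≠ 0 := ne_of_gt hq
        rw [mul_sub, mul_div_cancel₀ _ hq'] at this
        nlinarith
      rw [Real.logb, ← mul_div_assoc]
      gcongr
  have hsum : ∑ i, ∑ j, (q i j - (∑ j', q i j') * (∑ i', q i' j)) = 0 := by
    have hcol : ∑ j, ∑ i, q i j = 1 := RD_colS_sum q hq1
    have h2 : ∑ i, ∑ j, (∑ j', q i j') * (∑ i', q i' j) = 1 := by
      have : ∀ i, ∑ j, (∑ j', q i j') * (∑ i', q i' j)
          = (∑ j', q i j') * (∑ j, ∑ i', q i' j) := by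
        intro i; rw [Finset.mul_sum]
      simp only [this, hcol, mul_one, hq1]
    simp [Finset.sum_sub_distrib, hq1, h2]
  calc (0:ℝ) = (∑ i, ∑ j, (q i j - (∑ j', q i j') * (∑ i', q i' j))) / Real.log 2 := by
        rw [hsum, zero_div]
  _ = ∑ i, ∑ j, (q i j - (∑ j', q i j') * (∑ i', q i' j)) / Real.log 2 := by
        rw [Finset.sum_div]
        exact Finset.sum_congr rfl fun i _ => by rw [Finset.sum_div]
  _ ≤ RDMI q := Finset.sum_le_sum fun i _ => Finset.sum_le_sum fun j _ => key i j


noncomputable def RDG (q : X → Y → ℝ) : ℝ :=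
  (∑ i, ∑ j, q i j * Real.logb 2 (q i j))
  - (∑ i, (∑ j, q i j) * Real.logb 2 (∑ j, q i j))
  - (∑ j, (∑ i, q i j) * Real.logb 2 (∑ i, q i j))

lemma RDMI_eq_RDG (q : X → Y → ℝ) (hq0 : ∀ i j, 0 ≤ q i j) : RDMI q = RDG q := by
  have term : ∀ i j, q i j * Real.logb 2 (q i j / ((∑ j', q i j') * (∑ i', q i' j)))
      = q i j * Real.logb 2 (q i j) - q i j * Real.logb 2 (∑ j', q i j')
        - q i j * Real.logb 2 (∑ i', q i' j) := by
    intro i j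
    rcases eq_or_lt_of_le (hq0 i j) with hq | hq
    · simp [← hq]
    · have ha : 0 < ∑ j', q i j' := lt_of_lt_of_le hq (RD_entry_le_rowS q hq0 i j)
      have hb : 0 < ∑ i', q i' j := lt_of_lt_of_le hq (RD_entry_le_colS q hq0 i j)
      rw [Real.logb_div (ne_of_gt hq) (by positivity),
        Real.logb_mul (ne_of_gt ha) (ne_of_gt hb)]
      ring
  unfold RDMI RDG
  simp only [term, Finset.sum_sub_distrib]
  congr 1
  · congr 1
    exact Finset.sum_congr rfl fun i _ => by rw [← Finset.sum_mul]
  · rw [Finset.sum_comm]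
    exact Finset.sum_congr rfl fun j _ => by rw [← Finset.sum_mul]

lemma RD_mulLogb_continuous : Continuous fun x : ℝ => x * Real.logb 2 x := by
  have : (fun x : ℝ => x * Real.logb 2 x) = fun x => (x * Real.log x) / Real.log 2 := by
    funext x; rw [Real.logb]; ring
  rw [this]
  exact Real.continuous_mul_log.div_const _

lemma RDG_continuous : Continuous (RDG : (X → Y → ℝ) → ℝ) := by
  have h1 : ∀ (i : X) (j : Y), Continuous fun q : X → Y → ℝ => q i j :=
    fun i j => (continuous_apply j).comp (continuous_apply i)
  apply Continuous.sub
  apply Continuous.sub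
  · exact continuous_finset_sum _ fun i _ => continuous_finset_sum _ fun j _ =>
      RD_mulLogb_continuous.comp (h1 i j)
  · exact continuous_finset_sum _ fun i _ =>
      RD_mulLogb_continuous.comp (continuous_finset_sum _ fun j _ => h1 i j)
  · exact continuous_finset_sum _ fun j _ =>
      RD_mulLogb_continuous.comp (continuous_finset_sum _ fun i _ => h1 i j)

/-- The compact cube. -/
def RDK : Set (X → Y → ℝ) := Set.univ.pi fun _ : X => Set.univ.pi fun _ : Y => Set.Icc (0:ℝ) 1

lemma RDK_mem (q : X → Y → ℝ) : q ∈ (RDK : Set (X → Y → ℝ)) ↔ ∀ i j, q i j ∈ Set.Icc (0:ℝ) 1 := by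
  simp only [RDK, Set.mem_pi, Set.mem_univ, forall_true_left]

lemma RDK_compact : IsCompact (RDK : Set (X → Y → ℝ)) :=
  isCompact_univ_pi fun _ => isCompact_univ_pi fun _ => isCompact_Icc

lemma RDG_unif {ε : ℝ} (hε : 0 < ε) : ∃ δ > 0, ∀ q q' : X → Y → ℝ,
    q ∈ RDK → q' ∈ RDK → (∀ i j, |q i j - q' i j| < δ) → |RDG q - RDG q'| < ε := by
  have huc : UniformContinuousOn RDG (RDK : Set (X → Y → ℝ)) :=
    RDK_compact.uniformContinuousOn_of_continuous RDG_continuous.continuousOn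
  rw [Metric.uniformContinuousOn_iff] at huc
  obtain ⟨δ, hδ, h⟩ := huc ε hε
  refine ⟨δ, hδ, fun q q' hq hq' hent => ?_⟩
  have hdist : dist q q' < δ := by
    rw [dist_pi_lt_iff hδ]
    intro i
    rw [dist_pi_lt_iff hδ]
    intro j
    rw [Real.dist_eq]
    exact hent i j
  have := h q hq q' hq' hdist
  rwa [Real.dist_eq] at this


lemma RD_perturb (d : X → Y → ℝ) (hd : ∀ i j, 0 ≤ d i j) (D Dm : ℝ)
    (hDm0 : 0 ≤ Dm) (hDmD : Dm < D)
    (j0 : X → Y) (hj0 : ∀ i, d i (j0 i) ≤ Dm)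
    (p p' : X → ℝ) (hp0 : ∀ i, 0 ≤ p i) (hp'0 : ∀ i, 0 ≤ p' i) (hp'1 : ∑ i, p' i = 1)
    (q : X → Y → ℝ) (hq0 : ∀ i j, 0 ≤ q i j) (hrow : ∀ i, (∑ j, q i j) = p i)
    (hdist : ∑ i, ∑ j, q i j * d i j ≤ D)
    (ht : (∑ i, |p' i - p i|) * Dm ≤ D - Dm) :
    ∃ q' : X → Y → ℝ, (∀ i j, 0 ≤ q' i j) ∧ (∑ i, ∑ j, q' i j = 1) ∧
      (∀ i, (∑ j, q' i j) = p' i) ∧ (∑ i, ∑ j, q' i j * d i j ≤ D) ∧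
      (∀ i j, |q' i j - q i j|
        ≤ 2 * (∑ i, |p' i - p i|) + (∑ i, |p' i - p i|) * Dm / (D - Dm)) := by
  classical
  set t := ∑ i, |p' i - p i| with ht_def
  have ht0 : 0 ≤ t := Finset.sum_nonneg fun i _ => abs_nonneg _
  have htent : ∀ i, |p' i - p i| ≤ t := fun i =>
    Finset.single_le_sum (f := fun i => |p' i - p i|) (fun i' _ => abs_nonneg _)
      (Finset.mem_univ i)
  have hDs : (0:ℝ) < D - Dm := sub_pos.mpr hDmD
  set l := t * Dm / (D - Dm) with hl_def
  have hl0 : 0 ≤ l := by positivity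
  have hl1 : l ≤ 1 := by rw [hl_def, div_le_one hDs]; simpa using ht
  have hlD : l * (D - Dm) = t * Dm := div_mul_cancel₀ _ (ne_of_gt hDs)
  set c : X → ℝ := fun i => if p i = 0 then 0 else min (p' i) (p i) / p i with hc_def
  set m : X → ℝ := fun i => p' i - min (p' i) (p i) with hm_def
  have hppos : ∀ i, p i ≠ 0 → 0 < p i := fun i h => lt_of_le_of_ne (hp0 i) (Ne.symm h)
  have hc0 : ∀ i, 0 ≤ c i := by
    intro i; rw [hc_def]; dsimp only; split
    · exact le_refl 0
    · exact div_nonneg (le_min (hp'0 i) (hp0 i)) (hp0 i)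
  have hc1 : ∀ i, c i ≤ 1 := by
    intro i; rw [hc_def]; dsimp only; split
    · exact zero_le_one
    · exact (div_le_one (hppos i (by assumption))).mpr (min_le_right _ _)
  have hm0 : ∀ i, 0 ≤ m i := fun i => sub_nonneg.mpr (min_le_left _ _)
  have hm_le : ∀ i, m i ≤ |p' i - p i| := by
    intro i; rw [hm_def]; dsimp only
    rcases le_total (p' i) (p i) with h | h
    · rw [min_eq_left h]; simpa using abs_nonneg (p' i - p i)
    · rw [min_eq_right h]; exact le_abs_self _
  have hpmin : ∀ i, p i - min (p' i) (p i) ≤ |p' i - p i| := by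
    intro i
    rcases le_total (p' i) (p i) with h | h
    · rw [min_eq_left h, abs_sub_comm]; exact le_abs_self _
    · rw [min_eq_right h]; simpa using abs_nonneg (p' i - p i)
  have hcpm : ∀ i, c i * p i + m i = p' i := by
    intro i; rw [hc_def, hm_def]; dsimp only; split
    · rename_i h
      rw [h, min_eq_right (hp'0 i)]
      ring
    · rename_i h
      rw [div_mul_cancel₀ _ h]; ring
  have hq_le_p : ∀ i j, q i j ≤ p i := fun i j => (hrow i) ▸ RD_entry_le_rowS q hq0 i j
  have hp'le1 : ∀ i, p' i ≤ 1 := by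
    intro i
    calc p' i ≤ ∑ i', p' i' := Finset.single_le_sum (fun i' _ => hp'0 i') (Finset.mem_univ i)
    _ = 1 := hp'1
  set q' : X → Y → ℝ := fun i j => (1 - l) * (c i * q i j + (if j = j0 i then m i else 0))
      + l * (if j = j0 i then p' i else 0) with hq'_def
  have hite : ∀ (i : X) (x : ℝ), ∑ j, (if j = j0 i then x else 0) = x := by
    intro i x; simp
  have hq'0 : ∀ i j, 0 ≤ q' i j := by
    intro i j
    have hM : 0 ≤ (if j = j0 i then m i else 0) := by split; exacts [hm0 i, le_refl 0]
    have hP : 0 ≤ (if j = j0 i then p' i else 0) := by split; exacts [hp'0 i, le_refl 0]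
    rw [hq'_def]
    have := mul_nonneg (hc0 i) (hq0 i j)
    have h1l : (0:ℝ) ≤ 1 - l := by linarith
    positivity
  have hrows : ∀ i, ∑ j, q' i j = p' i := by
    intro i
    rw [hq'_def]
    dsimp only
    rw [Finset.sum_add_distrib, ← Finset.mul_sum, ← Finset.mul_sum,
      Finset.sum_add_distrib, ← Finset.mul_sum, hrow i, hite, hite, hcpm i]
    ring
  have hdist_i : ∀ i, ∑ j, q' i j * d i j
      = (1 - l) * (c i * (∑ j, q i j * d i j) + m i * d i (j0 i))
        + l * (p' i * d i (j0 i)) := by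
    intro i
    have hterm : ∀ j, q' i j * d i j
        = (1 - l) * (c i * (q i j * d i j))
          + (1 - l) * ((if j = j0 i then m i else 0) * d i j)
          + l * ((if j = j0 i then p' i else 0) * d i j) := by
      intro j; rw [hq'_def]; ring
    rw [Finset.sum_congr rfl fun j _ => hterm j, Finset.sum_add_distrib,
      Finset.sum_add_distrib, ← Finset.mul_sum, ← Finset.mul_sum, ← Finset.mul_sum,
      ← Finset.mul_sum]
    have h1 : ∑ j, (if j = j0 i then m i else 0) * d i j = m i * d i (j0 i) := by
      simp [ite_mul]
    have h2 : ∑ j, (if j = j0 i then p' i else 0) * d i j = p' i * d i (j0 i) := by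
      simp [ite_mul]
    rw [h1, h2]
    ring
  have hdistq' : ∑ i, ∑ j, q' i j * d i j ≤ D := by
    have hS1 : ∑ i, (c i * (∑ j, q i j * d i j) + m i * d i (j0 i)) ≤ D + t * Dm := by
      have hterm : ∀ i, c i * (∑ j, q i j * d i j) + m i * d i (j0 i)
          ≤ (∑ j, q i j * d i j) + |p' i - p i| * Dm := by
        intro i
        have hDi : 0 ≤ ∑ j, q i j * d i j :=
          Finset.sum_nonneg fun j _ => mul_nonneg (hq0 i j) (hd i j)
        exact add_le_add (mul_le_of_le_one_left hDi (hc1 i))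
          (mul_le_mul (hm_le i) (hj0 i) (hd i (j0 i)) (abs_nonneg _))
      calc ∑ i, (c i * (∑ j, q i j * d i j) + m i * d i (j0 i))
          ≤ ∑ i, ((∑ j, q i j * d i j) + |p' i - p i| * Dm) :=
            Finset.sum_le_sum fun i _ => hterm i
      _ = (∑ i, ∑ j, q i j * d i j) + t * Dm := by
            rw [Finset.sum_add_distrib, ← Finset.sum_mul]
      _ ≤ D + t * Dm := add_le_add_left hdist _
    have hS3 : ∑ i, p' i * d i (j0 i) ≤ Dm := by
      calc ∑ i, p' i * d i (j0 i) ≤ ∑ i, p' i * Dm :=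
          Finset.sum_le_sum fun i _ => mul_le_mul_of_nonneg_left (hj0 i) (hp'0 i)
      _ = Dm := by rw [← Finset.sum_mul, hp'1, one_mul]
    rw [Finset.sum_congr rfl fun i _ => hdist_i i, Finset.sum_add_distrib,
      ← Finset.mul_sum, ← Finset.mul_sum]
    have h1l : (0:ℝ) ≤ 1 - l := by linarith
    have hS1' : (1 - l) * (∑ i, (c i * (∑ j, q i j * d i j) + m i * d i (j0 i)))
        ≤ (1 - l) * (D + t * Dm) := mul_le_mul_of_nonneg_left hS1 h1l
    have hS3' : l * (∑ i, p' i * d i (j0 i)) ≤ l * Dm := mul_le_mul_of_nonneg_left hS3 hl0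
    nlinarith [mul_nonneg (mul_nonneg hl0 ht0) hDm0]
  have hentry : ∀ i j, |q' i j - q i j| ≤ 2 * t + t * Dm / (D - Dm) := by
    intro i j
    have hM0 : 0 ≤ (if j = j0 i then m i else 0) := by split; exacts [hm0 i, le_refl 0]
    have hMm : (if j = j0 i then m i else 0) ≤ m i := by split; exacts [le_refl _, hm0 i]
    have hP0 : 0 ≤ (if j = j0 i then p' i else 0) := by split; exacts [hp'0 i, le_refl 0]
    have hPp : (if j = j0 i then p' i else 0) ≤ p' i := by split; exacts [le_refl _, hp'0 i]
    have h1 : (1 - c i) * q i j ≤ |p' i - p i| := by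
      rcases eq_or_ne (p i) 0 with h | h
      · have hq0' : q i j = 0 := le_antisymm (h ▸ hq_le_p i j) (hq0 i j)
        rw [hq0', mul_zero]
        exact abs_nonneg _
      · have h1c : 0 ≤ 1 - c i := by linarith [hc1 i]
        calc (1 - c i) * q i j ≤ (1 - c i) * p i :=
            mul_le_mul_of_nonneg_left (hq_le_p i j) h1c
        _ = p i - min (p' i) (p i) := by
            rw [hc_def]; dsimp only
            rw [if_neg h, sub_mul, one_mul, div_mul_cancel₀ _ h]
        _ ≤ |p' i - p i| := hpmin i
    have hA0 : 0 ≤ c i * q i j + (if j = j0 i then m i else 0) :=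
      add_nonneg (mul_nonneg (hc0 i) (hq0 i j)) hM0
    have hAp' : c i * q i j + (if j = j0 i then m i else 0) ≤ p' i := by
      calc c i * q i j + (if j = j0 i then m i else 0) ≤ c i * p i + m i :=
          add_le_add (mul_le_mul_of_nonneg_left (hq_le_p i j) (hc0 i)) hMm
      _ = p' i := hcpm i
    have hq'v : q' i j = (1 - l) * (c i * q i j + (if j = j0 i then m i else 0))
        + l * (if j = j0 i then p' i else 0) := by rw [hq'_def]
    rw [hq'v, ← hl_def, abs_le]
    have hent := htent i
    have hml := hm_le i
    have hq0ij := hq0 i j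
    have hp'1i := hp'le1 i
    constructor
    · nlinarith [mul_le_mul_of_nonneg_left hAp' hl0, mul_nonneg hl0 hP0,
        mul_le_mul_of_nonneg_left hp'1i hl0, mul_nonneg hl0 hA0,
        mul_le_of_le_one_left hq0ij (hc1 i), mul_nonneg (hc0 i) hq0ij]
    · nlinarith [mul_le_mul_of_nonneg_left hAp' hl0, mul_nonneg hl0 hP0,
        mul_le_mul_of_nonneg_left hPp hl0, mul_le_mul_of_nonneg_left hp'1i hl0,
        mul_nonneg hl0 hA0, mul_le_of_le_one_left hq0ij (hc1 i),
        mul_nonneg (hc0 i) hq0ij]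
  refine ⟨q', hq'0, ?_, hrows, hdistq', hentry⟩
  rw [Finset.sum_congr rfl fun i _ => hrows i, hp'1]


lemma RDSet_bddBelow (p : X → ℝ) (d : X → Y → ℝ) (D : ℝ) : BddBelow (RDSet p d D) := by
  refine ⟨0, fun r hr => ?_⟩
  obtain ⟨q, hq0, hq1, _, _, hrval⟩ := hr
  rw [hrval]
  exact RDMI_nonneg q hq0 hq1

lemma RDSet_mem (p : X → ℝ) (d : X → Y → ℝ) (D : ℝ) (q : X → Y → ℝ)
    (hq0 : ∀ i j, 0 ≤ q i j) (hq1 : ∑ i, ∑ j, q i j = 1)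
    (hrow : ∀ i, (∑ j, q i j) = p i) (hdist : ∑ i, ∑ j, q i j * d i j ≤ D) :
    RDMI q ∈ RDSet p d D := ⟨q, hq0, hq1, hrow, hdist, rfl⟩

lemma RD_exists_j0 [Nonempty Y] (d : X → Y → ℝ) :
    ∃ j0 : X → Y, ∀ i : X,
      d i (j0 i) = Finset.univ.inf' Finset.univ_nonempty (fun j => d i j) := by
  choose j0 _ h using fun i : X =>
    Finset.exists_mem_eq_inf' (Finset.univ_nonempty) (fun j => d i j)
  exact ⟨j0, fun i => (h i).symm⟩

lemma RD_base [Nonempty X] [Nonempty Y] (d : X → Y → ℝ) (hd : ∀ i j, 0 ≤ d i j) (D : ℝ)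
    (hD : (Finset.univ.sup' Finset.univ_nonempty
            (fun i => Finset.univ.inf' Finset.univ_nonempty (fun j => d i j))) < D)
    (p : X → ℝ) (hp0 : ∀ i, 0 ≤ p i) (hp1 : ∑ i, p i = 1) :
    (RDSet p d D).Nonempty := by
  classical
  obtain ⟨j0, hj0eq⟩ := RD_exists_j0 d
  have hj0 : ∀ i, d i (j0 i) ≤ Finset.univ.sup' Finset.univ_nonempty
      (fun i => Finset.univ.inf' Finset.univ_nonempty (fun j => d i j)) := by
    intro i
    rw [hj0eq i]
    exact Finset.le_sup' (fun i => Finset.univ.inf' Finset.univ_nonempty (fun j => d i j))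
      (Finset.mem_univ i)
  set q0 : X → Y → ℝ := fun i j => if j = j0 i then p i else 0 with hq0_def
  have hrows : ∀ i, ∑ j, q0 i j = p i := by intro i; rw [hq0_def]; simp
  have hnn : ∀ i j, 0 ≤ q0 i j := by
    intro i j; rw [hq0_def]; dsimp only; split; exacts [hp0 i, le_refl 0]
  have htot : ∑ i, ∑ j, q0 i j = 1 := by
    rw [Finset.sum_congr rfl fun i _ => hrows i, hp1]
  have hdist : ∑ i, ∑ j, q0 i j * d i j ≤ D := by
    have hi : ∀ i, ∑ j, q0 i j * d i j = p i * d i (j0 i) := by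
      intro i; rw [hq0_def]; simp [ite_mul]
    calc ∑ i, ∑ j, q0 i j * d i j = ∑ i, p i * d i (j0 i) :=
        Finset.sum_congr rfl fun i _ => hi i
    _ ≤ ∑ i, p i * (Finset.univ.sup' Finset.univ_nonempty
          (fun i => Finset.univ.inf' Finset.univ_nonempty (fun j => d i j))) :=
        Finset.sum_le_sum fun i _ => mul_le_mul_of_nonneg_left (hj0 i) (hp0 i)
    _ = Finset.univ.sup' Finset.univ_nonempty
          (fun i => Finset.univ.inf' Finset.univ_nonempty (fun j => d i j)) := by
        rw [← Finset.sum_mul, hp1, one_mul]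
    _ ≤ D := hD.le
  exact ⟨RDMI q0, RDSet_mem p d D q0 hnn htot hrows hdist⟩

lemma RD_onesided [Nonempty X] [Nonempty Y] (d : X → Y → ℝ) (hd : ∀ i j, 0 ≤ d i j) (D : ℝ)
    (hD : (Finset.univ.sup' Finset.univ_nonempty
            (fun i => Finset.univ.inf' Finset.univ_nonempty (fun j => d i j))) < D)
    {ε : ℝ} (hε : 0 < ε) :
    ∃ δ > 0, ∀ p p' : X → ℝ, (∀ i, 0 ≤ p i) → (∑ i, p i = 1) →
      (∀ i, 0 ≤ p' i) → (∑ i, p' i = 1) → (∑ i, |p' i - p i|) < δ →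
      sInf (RDSet p' d D) ≤ sInf (RDSet p d D) + ε := by
  classical
  set Dm := Finset.univ.sup' Finset.univ_nonempty
      (fun i => Finset.univ.inf' Finset.univ_nonempty (fun j => d i j)) with hDm_def
  have hDm0 : 0 ≤ Dm := by
    obtain ⟨i0⟩ := (inferInstance : Nonempty X)
    have h1 : (0:ℝ) ≤ Finset.univ.inf' Finset.univ_nonempty (fun j => d i0 j) :=
      Finset.le_inf' _ _ fun j _ => hd i0 j
    exact le_trans h1 (Finset.le_sup'
      (fun i => Finset.univ.inf' Finset.univ_nonempty (fun j => d i j)) (Finset.mem_univ i0))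
  have hDs : (0:ℝ) < D - Dm := sub_pos.mpr hD
  obtain ⟨j0, hj0eq⟩ := RD_exists_j0 d
  have hj0 : ∀ i, d i (j0 i) ≤ Dm := by
    intro i
    rw [hj0eq i, hDm_def]
    exact Finset.le_sup' (fun i => Finset.univ.inf' Finset.univ_nonempty (fun j => d i j))
      (Finset.mem_univ i)
  obtain ⟨δG, hδG, hG⟩ := RDG_unif (X := X) (Y := Y) (half_pos hε)
  set C : ℝ := 2 + Dm / (D - Dm) with hC_def
  have hC0 : 0 < C := by positivity
  refine ⟨min (δG / (C + 1)) ((D - Dm) / (Dm + 1)), by positivity, ?_⟩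
  intro p p' hp0 hp1 hp'0 hp'1 htδ
  set t := ∑ i, |p' i - p i| with ht_def
  have ht0 : 0 ≤ t := Finset.sum_nonneg fun i _ => abs_nonneg _
  have ht1 : t < δG / (C + 1) := lt_of_lt_of_le htδ (min_le_left _ _)
  have ht2 : t < (D - Dm) / (Dm + 1) := lt_of_lt_of_le htδ (min_le_right _ _)
  have htDm : t * Dm ≤ D - Dm := by
    have := (lt_div_iff₀ (by positivity : (0:ℝ) < Dm + 1)).mp ht2
    nlinarith
  have hbb' := RDSet_bddBelow p' d D
  have hbb := RDSet_bddBelow p d D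
  have hne := RD_base d hd D hD p hp0 hp1
  obtain ⟨r, hrmem, hrlt⟩ := (csInf_lt_iff hbb hne).mp
    (lt_add_of_pos_right (sInf (RDSet p d D)) (half_pos hε))
  obtain ⟨q, hq0, hq1, hrow, hdistq, hrval⟩ := hrmem
  obtain ⟨q', h'0, h'1, h'row, h'dist, h'ent⟩ :=
    RD_perturb d hd D Dm hDm0 hD j0 hj0 p p' hp0 hp'0 hp'1 q hq0 hrow hdistq htDm
  have hentδ : ∀ i j, |q' i j - q i j| < δG := by
    intro i j
    have h1 : 2 * t + t * Dm / (D - Dm) = t * C := by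
      rw [hC_def]; field_simp
    have h2 : t * C < δG := by
      have h3 : t * C ≤ δG / (C + 1) * C :=
        mul_le_mul_of_nonneg_right ht1.le hC0.le
      have h4 : δG / (C + 1) * C < δG := by
        rw [div_mul_eq_mul_div, div_lt_iff₀ (by positivity : (0:ℝ) < C + 1)]
        exact mul_lt_mul_of_pos_left (lt_add_one C) hδG
      exact lt_of_le_of_lt h3 h4
    calc |q' i j - q i j| ≤ 2 * t + t * Dm / (D - Dm) := h'ent i j
    _ = t * C := h1
    _ < δG := h2
  have hqK : q ∈ (RDK : Set (X → Y → ℝ)) := by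
    rw [RDK_mem]
    exact fun i j => ⟨hq0 i j, RD_entry_le_one q hq0 hq1 i j⟩
  have hq'K : q' ∈ (RDK : Set (X → Y → ℝ)) := by
    rw [RDK_mem]
    exact fun i j => ⟨h'0 i j, RD_entry_le_one q' h'0 h'1 i j⟩
  have hGG : |RDG q' - RDG q| < ε / 2 := hG q' q hq'K hqK hentδ
  have hMI' : RDMI q' = RDG q' := RDMI_eq_RDG q' h'0
  have hMI : RDMI q = RDG q := RDMI_eq_RDG q hq0
  have hrMI : r = RDMI q := hrval
  have hle : sInf (RDSet p' d D) ≤ RDMI q' :=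
    csInf_le hbb' (RDSet_mem p' d D q' h'0 h'1 h'row h'dist)
  have habs := abs_lt.mp hGG
  linarith [habs.1, habs.2]

end RDaux

theorem rateDistortion_continuous_in_source'
    {X Y : Type} [Fintype X] [Fintype Y] [Nonempty X] [Nonempty Y]
    (d : X → Y → ℝ) (hd : ∀ i j, 0 ≤ d i j) (D : ℝ)
    (hD : (Finset.univ.sup' Finset.univ_nonempty
            (fun i => Finset.univ.inf' Finset.univ_nonempty (fun j => d i j))) < D)
    (p : X → ℝ) (hp0 : ∀ i, 0 ≤ p i) (hp1 : ∑ i, p i = 1)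
    (pk : ℕ → X → ℝ)
    (hpk0 : ∀ k i, 0 ≤ pk k i) (hpk1 : ∀ k, ∑ i, pk k i = 1)
    (hconv : Tendsto (fun k => ∑ i, |pk k i - p i|) atTop (nhds 0)) :
    Tendsto (fun k => sInf (RDSet (pk k) d D)) atTop
      (nhds (sInf (RDSet p d D))) := by
  rw [Metric.tendsto_atTop]
  intro ε hε
  obtain ⟨δ, hδ, hone⟩ := RD_onesided d hd D hD (half_pos hε)
  obtain ⟨N, hN⟩ := Metric.tendsto_atTop.mp hconv δ hδ
  refine ⟨N, fun k hk => ?_⟩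
  have hdk : (∑ i, |pk k i - p i|) < δ := by
    have h := hN k hk
    rw [Real.dist_eq, sub_zero] at h
    exact lt_of_le_of_lt (le_abs_self _) h
  have hdk' : (∑ i, |p i - pk k i|) < δ := by
    have : (∑ i, |p i - pk k i|) = ∑ i, |pk k i - p i| :=
      Finset.sum_congr rfl fun i _ => abs_sub_comm _ _
    rw [this]; exact hdk
  have h1 : sInf (RDSet (pk k) d D) ≤ sInf (RDSet p d D) + ε / 2 :=
    hone p (pk k) hp0 hp1 (hpk0 k) (hpk1 k) hdk
  have h2 : sInf (RDSet p d D) ≤ sInf (RDSet (pk k) d D) + ε / 2 :=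
    hone (pk k) p (hpk0 k) (hpk1 k) hp0 hp1 hdk'
  rw [Real.dist_eq, abs_lt]
  constructor <;> linarith


/-- continuity of the rate-distortion function in the source pmf: if pmfs
`p⁽ᵏ⁾ → p` in total variation and `D > max_i min_j d(i,j)` (strict feasibility), then
`R_{p⁽ᵏ⁾}(D) → R_p(D)`. -/
theorem rateDistortion_continuous_in_source
    {X Y : Type} [Fintype X] [Fintype Y] [Nonempty X] [Nonempty Y]
    (d : X → Y → ℝ) (hd : ∀ i j, 0 ≤ d i j) (D : ℝ)
    (hD : (Finset.univ.sup' Finset.univ_nonempty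
            (fun i => Finset.univ.inf' Finset.univ_nonempty (fun j => d i j))) < D)
    (p : X → ℝ) (hp0 : ∀ i, 0 ≤ p i) (hp1 : ∑ i, p i = 1)
    (pk : ℕ → X → ℝ)
    (hpk0 : ∀ k i, 0 ≤ pk k i) (hpk1 : ∀ k, ∑ i, pk k i = 1)
    (hconv : Tendsto (fun k => ∑ i, |pk k i - p i|) atTop (nhds 0)) :
    Tendsto (fun k => rateDistortionFn (pk k) d D) atTop
      (nhds (rateDistortionFn p d D)) := by
  have e : ∀ p' : X → ℝ, rateDistortionFn p' d D = sInf (RDSet p' d D) := fun _ => rfl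
  simp only [e]
  exact rateDistortion_continuous_in_source' d hd D hD p hp0 hp1 pk hpk0 hpk1 hconv
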